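/- arXiv:1012.2668 — 2 statements merged into one kernel-verified Lean document; each statement's English description precedes it below -/
import Mathlib

section
/- Let p(t, X) be a polynomial in X whose coefficients are real polynomials in a parameter t, monic in X of degree d. Define the discriminant variety V ⊂ ℝ as the set of t where the discriminant of p(t, ·) (with respect to X) vanishes. Then on any connected open subset U of ℝ \ V, the number of distinct real roots of p(t, ·) is constant as t ranges over U. -/
/-! A root `y` of `p(t₀, ·)` off the discriminant variety is simple, so `∂ₓp` stays away from `0`
near `(t₀, y)`: for `t` near `t₀` the function `p(t, ·)` is strictly monotone on a small ball
around `y`, and the sign change of `p(t₀, ·)` across `y` persists, so `p(t, ·)` has exactly one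
root in that ball. Since `p` is monic, Cauchy's bound keeps all real roots of `p(t, ·)` in a fixed
compact set for `t` near `t₀`, and compactness then puts every root of `p(t, ·)` into one of
these balls. Hence the number of distinct real roots is locally constant on `U`, and so constant
on the connected set `U`. -/

open Polynomial Filter Function Metric Set Topology

theorem exists_mem_Ioo_eq_zero_of_mul_neg {f : ℝ → ℝ} {a b : ℝ} (hab : a ≤ b)
    (hf : ContinuousOn f (Icc a b)) (h : f a * f b < 0) : ∃ x ∈ Ioo a b, f x = 0 := by
  rcases mul_neg_iff.1 h with ⟨ha, hb⟩ | ⟨ha, hb⟩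
  · exact intermediate_value_Ioo' hab hf ⟨hb, ha⟩
  · exact intermediate_value_Ioo hab hf ⟨ha, hb⟩

theorem strictMonoOn_or_strictAntiOn_of_hasDerivAt_ne_zero {f f' : ℝ → ℝ} {s : Set ℝ}
    (hs : Convex ℝ s) (hf : ∀ x ∈ s, HasDerivAt f (f' x) x) (hf' : ∀ x ∈ s, f' x ≠ 0) :
    StrictMonoOn f s ∨ StrictAntiOn f s := by
  have hcont : ContinuousOn f s := fun x hx => (hf x hx).continuousAt.continuousWithinAt
  have hderiv : ∀ x ∈ interior s, HasDerivWithinAt f (f' x) (interior s) x :=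
    fun x hx => (hf x (interior_subset hx)).hasDerivWithinAt
  rcases hasDerivWithinAt_forall_lt_or_forall_gt_of_forall_ne hs
    (fun x hx => (hf x hx).hasDerivWithinAt) hf' with hneg | hpos
  · exact .inr <| strictAntiOn_of_hasDerivWithinAt_neg hs hcont hderiv
      fun x hx => hneg x (interior_subset hx)
  · exact .inl <| strictMonoOn_of_hasDerivWithinAt_pos hs hcont hderiv
      fun x hx => hpos x (interior_subset hx)

theorem Finset.eventually_pairwiseDisjoint_ball {α : Type*} [MetricSpace α] (s : Finset α) :
    ∀ᶠ η in 𝓝 (0 : ℝ), (s : Set α).PairwiseDisjoint (ball · η) := by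
  have hpair : ∀ x ∈ s, ∀ y ∈ s, ∀ᶠ η in 𝓝 (0 : ℝ), x ≠ y → Disjoint (ball x η) (ball y η) := by
    intro x _ y _
    refine eventually_imp_distrib_left.2 fun hxy => ?_
    filter_upwards [eventually_lt_nhds (half_pos (dist_pos.2 hxy))] with η hη
    exact ball_disjoint_ball (by linarith)
  filter_upwards [(eventually_all_finset s).2 fun x hx => (eventually_all_finset s).2 (hpair x hx)]
    with η hη x hx y hy hxy using hη x hx y hy hxy

section ParametricZeros

variable {X : Type*} [TopologicalSpace X] {F G : X → ℝ → ℝ} {t₀ : X}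

theorem eventually_exists_mem_Ioo_eq_zero (hF : Continuous (uncurry F)) {a b : ℝ} (hab : a ≤ b)
    (hsign : F t₀ a * F t₀ b < 0) : ∀ᶠ t in 𝓝 t₀, ∃ x ∈ Ioo a b, F t x = 0 := by
  have hcont : ∀ x, Continuous (F · x) := fun x => hF.comp (continuous_id.prodMk continuous_const)
  filter_upwards [((hcont a).mul (hcont b)).continuousAt.eventually_lt continuousAt_const hsign]
    with t ht
  exact exists_mem_Ioo_eq_zero_of_mul_neg hab
    (hF.comp (continuous_const.prodMk continuous_id)).continuousOn ht

theorem eventually_strictMonoOn_or_strictAntiOn_ball (hG : Continuous (uncurry G))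
    (hFG : ∀ t x, HasDerivAt (F t) (G t x) x) {y : ℝ} (hy : G t₀ y ≠ 0) :
    ∃ ε > 0, ∀ᶠ t in 𝓝 t₀, StrictMonoOn (F t) (ball y ε) ∨ StrictAntiOn (F t) (ball y ε) := by
  have hne : ∀ᶠ p in 𝓝 (t₀, y), uncurry G p ≠ 0 := hG.continuousAt.eventually_ne hy
  rw [nhds_prod_eq, eventually_prod_iff] at hne
  obtain ⟨pt, hpt, px, hpx, hG0⟩ := hne
  obtain ⟨ε, hε, hball⟩ := Metric.eventually_nhds_iff_ball.1 hpx
  refine ⟨ε, hε, ?_⟩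
  filter_upwards [hpt] with t ht
  exact strictMonoOn_or_strictAntiOn_of_hasDerivAt_ne_zero (convex_ball y ε)
    (fun x _ => hFG t x) fun x hx => hG0 ht (hball x hx)

theorem eventually_exists_zero_mem_ball_and_subsingleton (hF : Continuous (uncurry F))
    (hG : Continuous (uncurry G)) (hFG : ∀ t x, HasDerivAt (F t) (G t x) x) {y : ℝ}
    (hy : F t₀ y = 0) (hGy : G t₀ y ≠ 0) :
    ∀ᶠ η in 𝓝[>] (0 : ℝ), ∀ᶠ t in 𝓝 t₀,
      (∃ x ∈ ball y η, F t x = 0) ∧ {x ∈ ball y η | F t x = 0}.Subsingleton := by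
  obtain ⟨ε, hε, hmono⟩ := eventually_strictMonoOn_or_strictAntiOn_ball hG hFG hGy
  filter_upwards [Ioo_mem_nhdsGT hε] with η ⟨hη, hηε⟩
  have hsub : ball y η ⊆ ball y ε := ball_subset_ball hηε.le
  have hsign : F t₀ (y - η) * F t₀ (y + η) < 0 := by
    have hl : y - η ∈ ball y ε := by rw [Real.ball_eq_Ioo]; constructor <;> linarith
    have hr : y + η ∈ ball y ε := by rw [Real.ball_eq_Ioo]; constructor <;> linarith
    have hc : y ∈ ball y ε := mem_ball_self hε
    rcases hmono.self_of_nhds with h | h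
    · exact mul_neg_of_neg_of_pos (hy ▸ h hl hc (by linarith)) (hy ▸ h hc hr (by linarith))
    · exact mul_neg_of_pos_of_neg (hy ▸ h hl hc (by linarith)) (hy ▸ h hc hr (by linarith))
  filter_upwards [hmono, eventually_exists_mem_Ioo_eq_zero hF (by linarith) hsign]
    with t hmono_t ⟨x, hx, hFx⟩
  refine ⟨⟨x, by rwa [Real.ball_eq_Ioo], hFx⟩, ?_⟩
  rintro x₁ ⟨hx₁, h₁⟩ x₂ ⟨hx₂, h₂⟩
  exact hmono_t.elim (·.injOn) (·.injOn) (hsub hx₁) (hsub hx₂) (h₁.trans h₂.symm)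

theorem eventually_zeros_subset_thickening (hF : Continuous (uncurry F)) {K : Set ℝ}
    (hK : IsCompact K) (hzeros : ∀ᶠ t in 𝓝 t₀, ∀ x, F t x = 0 → x ∈ K) {η : ℝ} (hη : 0 < η) :
    ∀ᶠ t in 𝓝 t₀, {x | F t x = 0} ⊆ thickening η {x | F t₀ x = 0} := by
  have hne : ∀ᶠ t in 𝓝 t₀, ∀ x ∈ K \ thickening η {x | F t₀ x = 0}, F t x ≠ 0 :=
    (hK.diff isOpen_thickening).eventually_forall_of_forall_eventually fun x hx =>
      hF.continuousAt.eventually_ne fun h => hx.2 (self_subset_thickening hη _ h)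
  filter_upwards [hzeros, hne] with t hzeros_t hne_t x hx
  by_contra h
  exact hne_t x ⟨hzeros_t x hx, h⟩ hx

theorem eventually_card_eq_of_simple_zeros (hF : Continuous (uncurry F))
    (hG : Continuous (uncurry G)) (hFG : ∀ t x, HasDerivAt (F t) (G t x) x)
    (Z : X → Finset ℝ) (hZ : ∀ t x, x ∈ Z t ↔ F t x = 0) (hsimple : ∀ y ∈ Z t₀, G t₀ y ≠ 0)
    {K : Set ℝ} (hK : IsCompact K) (hzeros : ∀ᶠ t in 𝓝 t₀, ∀ x, F t x = 0 → x ∈ K) :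
    ∀ᶠ t in 𝓝 t₀, (Z t).card = (Z t₀).card := by
  have hloc := (eventually_all_finset (Z t₀)).2 fun y hy =>
    eventually_exists_zero_mem_ball_and_subsingleton hF hG hFG ((hZ _ _).1 hy) (hsimple y hy)
  obtain ⟨η, ⟨hloc, hdisj⟩, hη⟩ :=
    ((hloc.and ((Z t₀).eventually_pairwiseDisjoint_ball.filter_mono nhdsWithin_le_nhds)).and
      self_mem_nhdsWithin).exists
  filter_upwards [(eventually_all_finset _).2 hloc,
    eventually_zeros_subset_thickening hF hK hzeros hη] with t hloc_t hcover
  refine le_antisymm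
    (Finset.card_le_card_of_forall_subsingleton (fun x y => x ∈ ball y η) ?_ ?_)
    (Finset.card_le_card_of_forall_subsingleton (fun y x => x ∈ ball y η) ?_ ?_)
  · intro x hx
    obtain ⟨y, hy, hxy⟩ := mem_thickening_iff.1 (hcover ((hZ t x).1 hx))
    exact ⟨y, (hZ _ _).2 hy, hxy⟩
  · intro y hy x₁ ⟨hx₁, hx₁y⟩ x₂ ⟨hx₂, hx₂y⟩
    exact (hloc_t y hy).2 ⟨hx₁y, (hZ _ _).1 hx₁⟩ ⟨hx₂y, (hZ _ _).1 hx₂⟩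
  · intro y hy
    obtain ⟨x, hxy, hx⟩ := (hloc_t y hy).1
    exact ⟨x, (hZ _ _).2 hx, hxy⟩
  · intro x _ y₁ ⟨hy₁, hxy₁⟩ y₂ ⟨hy₂, hxy₂⟩
    exact hdisj.elim_set hy₁ hy₂ x hxy₁ hxy₂

end ParametricZeros

namespace Polynomial

theorem continuous_evalEval {R : Type*} [CommSemiring R] [TopologicalSpace R]
    [IsTopologicalSemiring R] (q : R[X][X]) : Continuous fun p : R × R => q.evalEval p.1 p.2 := by
  induction q using Polynomial.induction_on' with
  | add p q hp hq =>
    simp only [evalEval_add]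
    exact hp.add hq
  | monomial n a =>
    simp only [← C_mul_X_pow_eq_monomial, evalEval_mul, evalEval_C, evalEval_pow, evalEval_X]
    exact (a.continuous.comp continuous_fst).mul (continuous_snd.pow n)

theorem hasDerivAt_evalEval {𝕜 : Type*} [NontriviallyNormedField 𝕜] (q : 𝕜[X][X]) (t x : 𝕜) :
    HasDerivAt (fun x => q.evalEval t x) ((derivative q).evalEval t x) x := by
  simpa only [map_evalRingHom_eval, derivative_map] using (q.map (evalRingHom t)).hasDerivAt x

theorem Monic.eventually_nnnorm_lt_of_evalEval_eq_zero {K : Type*} [NormedField K] {q : K[X][X]}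
    (hq : q.Monic) (t₀ : K) :
    ∀ᶠ t in 𝓝 t₀, ∀ x, q.evalEval t x = 0 → ‖x‖₊ < cauchyBound (q.map (evalRingHom t₀)) + 1 := by
  have hbound : (fun t => cauchyBound (q.map (evalRingHom t))) =
      fun t => (Finset.range q.natDegree).sup (fun i => ‖(q.coeff i).eval t‖₊) + 1 := by
    ext1 t
    simp [cauchyBound, (hq.map _).leadingCoeff, hq.natDegree_map, coeff_map]
  have hcont : Continuous fun t => cauchyBound (q.map (evalRingHom t)) := by
    rw [hbound]
    exact (Continuous.finset_sup_apply fun i _ => (q.coeff i).continuous.nnnorm).add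
      continuous_const
  filter_upwards [hcont.continuousAt.eventually_lt continuousAt_const (lt_add_one _)]
    with t ht x hx
  have hroot : (q.map (evalRingHom t)).IsRoot x := by rwa [IsRoot, map_evalRingHom_eval]
  exact (hroot.norm_lt_cauchyBound (hq.map _).ne_zero).trans ht

theorem Monic.eventually_card_roots_toFinset_map_evalRingHom_eq {q : ℝ[X][X]} (hq : q.Monic)
    {t₀ : ℝ} (hsimple : ∀ x, q.evalEval t₀ x = 0 → (derivative q).evalEval t₀ x ≠ 0) :
    ∀ᶠ t in 𝓝 t₀, (q.map (evalRingHom t)).roots.toFinset.card =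
      (q.map (evalRingHom t₀)).roots.toFinset.card := by
  have hroots : ∀ t x, x ∈ (q.map (evalRingHom t)).roots.toFinset ↔ q.evalEval t x = 0 := by
    intro t x
    rw [Multiset.mem_toFinset, mem_roots (hq.map _).ne_zero, IsRoot, map_evalRingHom_eval]
  refine eventually_card_eq_of_simple_zeros (continuous_evalEval q)
    (continuous_evalEval (derivative q)) (hasDerivAt_evalEval q) _ hroots
    (fun y hy => hsimple y ((hroots t₀ y).1 hy))
    (isCompact_closedBall 0 (cauchyBound (q.map (evalRingHom t₀)) + 1)) ?_
  filter_upwards [hq.eventually_nnnorm_lt_of_evalEval_eq_zero t₀] with t ht x hx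
  rw [mem_closedBall_zero_iff, ← coe_nnnorm]
  exact_mod_cast (ht x hx).le

theorem eval_derivative_ne_zero_of_rootMultiplicity_map_lt_two {A B : Type*} [CommRing A]
    [CommRing B] {f : A →+* B} (hf : Injective f) {p : A[X]} (hp : p ≠ 0) {a : A}
    (ha : p.IsRoot a) (hmult : (p.map f).rootMultiplicity (f a) < 2) :
    (derivative p).eval a ≠ 0 := fun h =>
  ((one_lt_rootMultiplicity_iff_isRoot hp).2 ⟨ha, h⟩).not_ge <| by
    rw [eq_rootMultiplicity_map hf]; omega

end Polynomial

theorem constant_real_root_count_off_discriminant_variety_general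
    (q : Polynomial (Polynomial ℝ))
    (hmonic : q.Monic)
    (V : Set ℝ)
    (hV : V = {t : ℝ | ∃ z : ℂ,
      2 ≤ ((q.map (Polynomial.evalRingHom t)).map (algebraMap ℝ ℂ)).rootMultiplicity z})
    (U : Set ℝ) (hUconn : IsConnected U)
    (hUV : U ⊆ Vᶜ) :
    ∀ t₁ ∈ U, ∀ t₂ ∈ U,
      (q.map (Polynomial.evalRingHom t₁)).roots.toFinset.card =
      (q.map (Polynomial.evalRingHom t₂)).roots.toFinset.card := by
  subst hV
  have hsimple : ∀ t ∈ U, ∀ x, q.evalEval t x = 0 → (derivative q).evalEval t x ≠ 0 := by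
    intro t ht x hx
    have hmult := not_le.1 (not_exists.1 (hUV ht) (algebraMap ℝ ℂ x))
    rw [← map_evalRingHom_eval, ← derivative_map]
    exact eval_derivative_ne_zero_of_rootMultiplicity_map_lt_two (algebraMap ℝ ℂ).injective
      (hmonic.map _).ne_zero (by rwa [IsRoot, map_evalRingHom_eval]) hmult
  intro t₁ h₁ t₂ h₂
  exact hUconn.isPreconnected.constant
    (f := fun t => (q.map (evalRingHom t)).roots.toFinset.card)
    (fun t ht => ContinuousAt.continuousWithinAt <| tendsto_nhds_of_eventually_eq <|
      hmonic.eventually_card_roots_toFinset_map_evalRingHom_eq (hsimple t ht)) h₁ h₂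

/-- For a parametric monic polynomial `q ∈ ℝ[t][X]`, on any connected open set
of parameters avoiding the discriminant variety (the set of parameters where
`q(t, ·)` has a multiple complex root, i.e. where the discriminant vanishes),
the number of distinct real roots of `q(t, ·)` is constant. -/
theorem constant_real_root_count_off_discriminant_variety
    (q : Polynomial (Polynomial ℝ)) (d : ℕ) (hd : 1 ≤ d)
    (hmonic : q.Monic) (hdeg : q.natDegree = d)
    (V : Set ℝ)
    (hV : V = {t : ℝ | ∃ z : ℂ,
      2 ≤ ((q.map (Polynomial.evalRingHom t)).map (algebraMap ℝ ℂ)).rootMultiplicity z})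
    (U : Set ℝ) (hUopen : IsOpen U) (hUconn : IsConnected U)
    (hUV : U ⊆ Vᶜ) :
    ∀ t₁ ∈ U, ∀ t₂ ∈ U,
      (q.map (Polynomial.evalRingHom t₁)).roots.toFinset.card =
      (q.map (Polynomial.evalRingHom t₂)).roots.toFinset.card :=
  constant_real_root_count_off_discriminant_variety_general q hmonic V hV U hUconn hUV
end

section
/- If p(t, X) is monic in X of degree d with coefficients polynomial in t ∈ ℝ, and t₀ is a parameter value at which all d complex roots of p(t₀, ·) are simple, then there is a neighborhood of t₀ on which the number of real roots of p(t, ·) is constant. -/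
/-!
The complex roots of `q(t₀, ·)` are `d` distinct points, pairwise more than `2δ` apart. Since
`‖q(t, z)‖ = ∏ ‖z - w‖` over the roots `w` of `q(t, ·)` and `q(t, r) → 0` as `t → t₀` at every
root `r` of `q(t₀, ·)`, each such `r` has a root of `q(t, ·)` within `δ` once `t` is near `t₀`.
These roots are distinct and `q(t, ·)` has at most `d` roots, so "within `δ`" is a bijection
between the two root sets. Complex conjugation preserves both root sets and distances, so the
bijection matches the conjugation-fixed roots, i.e. the real ones.
-/

open Polynomial Filter Topology Finset ComplexConjugate

theorem Finset.exists_pos_forall_dist_lt_imp_eq {α : Type*} [MetricSpace α] (S : Finset α) :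
    ∃ ε > 0, ∀ a ∈ S, ∀ b ∈ S, dist a b < ε → a = b := by
  have h : ∀ᶠ ε in 𝓝[>] (0 : ℝ), ∀ a ∈ S, ∀ b ∈ S, dist a b < ε → a = b := by
    refine S.eventually_all.2 fun a _ => S.eventually_all.2 fun b _ => ?_
    rcases eq_or_ne a b with rfl | hab
    · exact .of_forall fun _ _ => rfl
    · filter_upwards [Ioo_mem_nhdsGT (dist_pos.2 hab)] with ε hε h
      exact absurd h (not_lt.2 hε.2.le)
  exact (h.and self_mem_nhdsWithin).exists.imp fun ε h => ⟨h.2, h.1⟩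

theorem Finset.existsUnique_dist_lt_of_separated {α : Type*} [PseudoMetricSpace α]
    {S T : Finset α} {ε : ℝ} (hsep : ∀ a ∈ S, ∀ a' ∈ S, dist a a' < 2 * ε → a = a')
    (hcard : #T ≤ #S) (hnear : ∀ a ∈ S, ∃ b ∈ T, dist a b < ε) :
    (∀ a ∈ S, ∃! b, b ∈ T ∧ dist a b < ε) ∧ (∀ b ∈ T, ∃! a, a ∈ S ∧ dist a b < ε) := by
  classical
  have hS_unique : ∀ b, ∀ a ∈ S, ∀ a' ∈ S, dist a b < ε → dist a' b < ε → a = a' :=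
    fun b a ha a' ha' hab ha'b => hsep a ha a' ha' <| by
      linarith [dist_triangle a b a', dist_comm a' b]
  choose! φ hφT hφ using hnear
  have himage : S.image φ = T := by
    refine eq_of_subset_of_card_le (image_subset_iff.2 hφT) (hcard.trans_eq ?_)
    refine (card_image_of_injOn fun a ha a' ha' h => ?_).symm
    exact hS_unique (φ a) a ha a' ha' (hφ a ha) (h ▸ hφ a' ha')
  refine ⟨fun a ha => ⟨φ a, ⟨hφT a ha, hφ a ha⟩, fun b ⟨hb, hab⟩ => ?_⟩, fun b hb => ?_⟩
  · obtain ⟨c, hc, rfl⟩ := mem_image.1 (himage ▸ hb)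
    rw [hS_unique _ c hc a ha (hφ c hc) hab]
  · obtain ⟨a, ha, rfl⟩ := mem_image.1 (himage ▸ hb)
    exact ⟨a, ⟨ha, hφ a ha⟩, fun a' ⟨ha', h⟩ => hS_unique _ a' ha' a ha h (hφ a ha)⟩

theorem Finset.card_filter_fixed_eq_of_existsUnique {α β : Type*} [DecidableEq α] [DecidableEq β]
    {S : Finset α} {T : Finset β} {σ : α → α} {τ : β → β} {R : α → β → Prop}
    (hσ : ∀ a ∈ S, σ a ∈ S) (hτ : ∀ b ∈ T, τ b ∈ T) (hR : ∀ a b, R a b → R (σ a) (τ b))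
    (hST : ∀ a ∈ S, ∃! b, b ∈ T ∧ R a b) (hTS : ∀ b ∈ T, ∃! a, a ∈ S ∧ R a b) :
    #{a ∈ S | σ a = a} = #{b ∈ T | τ b = b} := by
  choose φ hφ hφ_unique using hST
  refine card_bij (fun a ha => φ a (mem_filter.1 ha).1) (fun a ha => ?_)
    (fun a ha a' ha' h => ?_) (fun b hb => ?_)
  · obtain ⟨ha, hfix⟩ := mem_filter.1 ha
    obtain ⟨hT, hR'⟩ := hφ a ha
    refine mem_filter.2 ⟨hT, hφ_unique a ha _ ⟨hτ _ hT, ?_⟩⟩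
    simpa [hfix] using hR _ _ hR'
  · have ha := (mem_filter.1 ha).1
    exact (hTS _ (hφ a ha).1).unique ⟨ha, (hφ a ha).2⟩ ⟨(mem_filter.1 ha').1, h ▸ (hφ a' _).2⟩
  · obtain ⟨hb, hfix⟩ := mem_filter.1 hb
    obtain ⟨a, ⟨ha, hab⟩, ha_unique⟩ := hTS b hb
    have hσa : σ a = a := ha_unique _ ⟨hσ a ha, hfix ▸ hR _ _ hab⟩
    exact ⟨a, mem_filter.2 ⟨ha, hσa⟩, (hφ_unique a ha b ⟨hb, hab⟩).symm⟩

namespace Polynomial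

theorem Splits.exists_mem_roots_norm_sub_lt {K : Type*} [NormedField K] {f : K[X]}
    (hf : f.Splits) (hm : f.Monic) {z : K} {ε : ℝ} (hε : 0 ≤ ε)
    (hz : ‖f.eval z‖ < ε ^ f.natDegree) : ∃ w ∈ f.roots, ‖z - w‖ < ε := by
  by_contra! hfar
  refine hz.not_ge ?_
  have hprod : ‖f.eval z‖ = (f.roots.map (‖z - ·‖)).prod := by
    rw [hf.eval_eq_prod_roots_of_monic hm, ← normHom_apply, map_multiset_prod, Multiset.map_map]
    rfl
  rw [hprod, hf.natDegree_eq_card_roots]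
  simpa using Multiset.prod_map_le_prod_map₀ (fun _ => ε) _ (fun _ _ => hε) hfar

theorem Monic.exists_mem_aroots_dist_lt {p : ℝ[X]} (hm : p.Monic) {z : ℂ} {ε : ℝ}
    (hε : 0 ≤ ε) (hz : ‖aeval z p‖ < ε ^ p.natDegree) : ∃ w ∈ p.aroots ℂ, dist z w < ε := by
  simp_rw [dist_eq_norm]
  refine (IsAlgClosed.splits _).exists_mem_roots_norm_sub_lt (hm.map _) hε ?_
  rwa [eval_map_algebraMap, hm.natDegree_map]

theorem continuous_aeval_map_evalRingHom {R A : Type*} [CommSemiring R] [CommSemiring A]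
    [Algebra R A] [TopologicalSpace R] [TopologicalSpace A] [IsTopologicalSemiring A]
    [ContinuousSMul R A] (q : R[X][X]) (z : A) :
    Continuous fun t => aeval z (q.map (evalRingHom t)) := by
  have h (t : R) : aeval z (q.map (evalRingHom t)) =
      (q.map (mapRingHom (algebraMap R A))).evalEval (algebraMap R A t) z := by
    rw [aeval_def, eval₂_map, ← eval₂_eval₂RingHom_apply]
    congr 1
    ext <;> simp
  simp_rw [h]
  exact (Polynomial.continuous _).comp (continuous_algebraMap R A)

theorem ofReal_mem_aroots_iff {p : ℝ[X]} {x : ℝ} : (x : ℂ) ∈ p.aroots ℂ ↔ x ∈ p.roots := by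
  rw [mem_aroots, mem_roots', IsRoot.def, ← Complex.coe_algebraMap,
    aeval_algebraMap_apply_eq_algebraMap_eval, Complex.coe_algebraMap, Complex.ofReal_eq_zero]

theorem conj_mem_aroots {p : ℝ[X]} {z : ℂ} (hz : z ∈ p.aroots ℂ) : conj z ∈ p.aroots ℂ := by
  obtain ⟨hp, hz⟩ := mem_aroots.1 hz
  refine mem_aroots.2 ⟨hp, ?_⟩
  simpa [hz] using aeval_algHom_apply Complex.conjAe z p

theorem card_roots_toFinset_eq_card_filter_conj (p : ℝ[X]) :
    #p.roots.toFinset = #{z ∈ (p.aroots ℂ).toFinset | conj z = z} := by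
  refine card_nbij (↑) (fun x hx => ?_) Complex.ofReal_injective.injOn (fun z hz => ?_)
  · exact mem_filter.2 ⟨Multiset.mem_toFinset.2 (ofReal_mem_aroots_iff.2
      (Multiset.mem_toFinset.1 hx)), Complex.conj_ofReal x⟩
  · obtain ⟨hz, hreal⟩ := mem_filter.1 hz
    obtain ⟨x, rfl⟩ := Complex.conj_eq_iff_real.1 hreal
    exact ⟨x, Multiset.mem_toFinset.2 (ofReal_mem_aroots_iff.1 (Multiset.mem_toFinset.1 hz)), rfl⟩

theorem card_roots_toFinset_eq_of_aroots_near {p p₀ : ℝ[X]}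
    (hdeg : p.natDegree ≤ p₀.natDegree) (hnodup : (p₀.aroots ℂ).Nodup) {ε : ℝ}
    (hsep : ∀ r ∈ p₀.aroots ℂ, ∀ s ∈ p₀.aroots ℂ, dist r s < 2 * ε → r = s)
    (hnear : ∀ r ∈ p₀.aroots ℂ, ∃ z ∈ p.aroots ℂ, dist r z < ε) :
    #p.roots.toFinset = #p₀.roots.toFinset := by
  have hcard : #(p.aroots ℂ).toFinset ≤ #(p₀.aroots ℂ).toFinset := calc
    _ ≤ Multiset.card (p.aroots ℂ) := Multiset.toFinset_card_le _
    _ ≤ p.natDegree := (card_roots' _).trans (natDegree_map _).le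
    _ ≤ p₀.natDegree := hdeg
    _ = #(p₀.aroots ℂ).toFinset := by
      rw [Multiset.toFinset_card_of_nodup hnodup, aroots_def, IsAlgClosed.card_roots_eq_natDegree,
        natDegree_map]
  obtain ⟨hST, hTS⟩ := existsUnique_dist_lt_of_separated (by simpa using hsep) hcard
    (by simpa using hnear)
  rw [card_roots_toFinset_eq_card_filter_conj, card_roots_toFinset_eq_card_filter_conj]
  refine (card_filter_fixed_eq_of_existsUnique (fun z hz => ?_) (fun z hz => ?_)
    (fun a b h => by rwa [Complex.dist_conj_conj]) hST hTS).symm <;>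
  simpa using conj_mem_aroots (Multiset.mem_toFinset.1 hz)

end Polynomial

theorem real_root_count_locally_constant_at_simple_general
    (q : Polynomial (Polynomial ℝ))
    (hmonic : q.Monic) (t₀ : ℝ)
    (hsimple : ∀ z : ℂ,
      ((q.map (Polynomial.evalRingHom t₀)).map (algebraMap ℝ ℂ)).rootMultiplicity z ≤ 1) :
    ∃ ε > 0, ∀ t : ℝ, |t - t₀| < ε →
      (q.map (Polynomial.evalRingHom t)).roots.toFinset.card =
      (q.map (Polynomial.evalRingHom t₀)).roots.toFinset.card := by
  set p : ℝ → ℝ[X] := fun t => q.map (evalRingHom t)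
  have hdeg (t : ℝ) : (p t).natDegree = q.natDegree := hmonic.natDegree_map _
  set S := ((p t₀).aroots ℂ).toFinset
  have hnodup : ((p t₀).aroots ℂ).Nodup :=
    Multiset.nodup_iff_count_le_one.2 fun z => (count_roots _).trans_le (hsimple z)
  obtain ⟨δ, hδ, hsep⟩ := S.exists_pos_forall_dist_lt_imp_eq
  have hsmall : ∀ᶠ t in 𝓝 t₀, ∀ r ∈ S, ‖aeval r (p t)‖ < (δ / 2) ^ q.natDegree := by
    refine S.eventually_all.2 fun r hr => ?_
    have hroot : aeval r (p t₀) = 0 := (mem_aroots.1 (Multiset.mem_toFinset.1 hr)).2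
    refine (continuous_aeval_map_evalRingHom q r).norm.tendsto t₀ |>.eventually (gt_mem_nhds ?_)
    rw [hroot, norm_zero]
    positivity
  obtain ⟨ε, hε, hball⟩ := Metric.eventually_nhds_iff.1 hsmall
  refine ⟨ε, hε, fun t ht => card_roots_toFinset_eq_of_aroots_near
    ((hdeg t).trans (hdeg t₀).symm).le hnodup (ε := δ / 2) (fun r hr s hs h => ?_) fun r hr => ?_⟩
  · exact hsep r (Multiset.mem_toFinset.2 hr) s (Multiset.mem_toFinset.2 hs) (by linarith)
  · refine (hmonic.map _).exists_mem_aroots_dist_lt (by positivity) ?_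
    rw [hdeg]
    exact hball (by rwa [Real.dist_eq]) r (Multiset.mem_toFinset.2 hr)

/-- If a parametric monic polynomial `q ∈ ℝ[t][X]` of degree `d` in `X` has,
at `t₀`, only simple complex roots, then the number of distinct real roots of
`q(t, ·)` is constant in a neighborhood of `t₀`. -/
theorem real_root_count_locally_constant_at_simple
    (q : Polynomial (Polynomial ℝ)) (d : ℕ) (hd : 1 ≤ d)
    (hmonic : q.Monic) (hdeg : q.natDegree = d) (t₀ : ℝ)
    (hsimple : ∀ z : ℂ,
      ((q.map (Polynomial.evalRingHom t₀)).map (algebraMap ℝ ℂ)).rootMultiplicity z ≤ 1) :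
    ∃ ε > 0, ∀ t : ℝ, |t - t₀| < ε →
      (q.map (Polynomial.evalRingHom t)).roots.toFinset.card =
      (q.map (Polynomial.evalRingHom t₀)).roots.toFinset.card :=
  real_root_count_locally_constant_at_simple_general q hmonic t₀ hsimple
end
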